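/- Let X be n×k of rank k, Z be n×(n−k) with X^T Z = 0 and rank n−k, Ω n×n positive definite, and ρ > 0. Set K₁ = ρ (X^T Ω^{-1} X)^{-1} and K₂ = ρ (X^T X)^{-1}. If Ω = X Γ X^T + Z Δ Z^T for some positive definite Γ and Δ (Rao's covariance structure), then K₁ X^T (Ω + X K₁ X^T)^{-1} = K₂ X^T (I_n + X K₂ X^T)^{-1}; that is, the two typical shrinkage (Bayes linear) estimators coincide. -/

import Mathlib

/-!
Let `L = (XᵀX)⁻¹Xᵀ` be the left inverse of `X`. Because `Xᵀ Z = 0`, `L` annihilates the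
`Z`-part of Rao's structure, so `L Ω = Γ Xᵀ`; hence `Xᵀ Ω⁻¹ = Γ⁻¹ L`, `Xᵀ Ω⁻¹ X = Γ⁻¹` and
`K₁ = ρ Γ`. Multiplying `Ω + X K₁ Xᵀ` and `1 + X K₂ Xᵀ` on the left by `L` gives `(1 + ρ) Γ Xᵀ`
and `(1 + ρ) L` respectively, so both estimators equal `ρ / (1 + ρ) • L`.
-/

open Matrix

namespace Matrix

section CommRing

variable {m n k p R : Type*} [Fintype n] [Fintype k] [Fintype p] [CommRing R]

theorem mul_inv_eq_of_mul_eq [DecidableEq n] {A : Matrix n n R} (hA : IsUnit A.det)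
    {L M : Matrix m n R} (h : L * A = M) : M * A⁻¹ = L :=
  h ▸ mul_nonsing_inv_cancel_right A L hA

theorem mul_raoForm_of_mul_eq [DecidableEq k] {X : Matrix n k R} {Z : Matrix n p R}
    {L : Matrix k n R} (hLX : L * X = 1) (hLZ : L * Z = 0) (G : Matrix k k R) (Δ : Matrix p p R) :
    L * (X * G * Xᵀ + Z * Δ * Zᵀ) = G * Xᵀ := by
  simp only [Matrix.mul_add, ← Matrix.mul_assoc, hLX, hLZ, Matrix.one_mul, Matrix.zero_mul,
    add_zero]

theorem transpose_mul_inv_raoForm_mul [DecidableEq n] [DecidableEq k] {X : Matrix n k R}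
    {Z : Matrix n p R} {L : Matrix k n R} (hLX : L * X = 1) (hLZ : L * Z = 0) {G : Matrix k k R}
    (hG : IsUnit G.det) {Δ : Matrix p p R} (hΩ : IsUnit (X * G * Xᵀ + Z * Δ * Zᵀ).det) :
    Xᵀ * (X * G * Xᵀ + Z * Δ * Zᵀ)⁻¹ * X = G⁻¹ := by
  have hXΩ : Xᵀ * (X * G * Xᵀ + Z * Δ * Zᵀ)⁻¹ = G⁻¹ * L := by
    refine mul_inv_eq_of_mul_eq hΩ ?_
    rw [Matrix.mul_assoc, mul_raoForm_of_mul_eq hLX hLZ, ← Matrix.mul_assoc,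
      nonsing_inv_mul G hG, Matrix.one_mul]
  rw [hXΩ, Matrix.mul_assoc, hLX, Matrix.mul_one]

end CommRing

section Field

variable {m n K : Type*} [Fintype n] [Field K]

theorem PosDef.isUnit_det [PartialOrder K] [StarRing K] [DecidableEq n] {A : Matrix n n K}
    (hA : A.PosDef) : IsUnit A.det :=
  (isUnit_iff_isUnit_det A).mp hA.isUnit

theorem mulVec_injective_of_rank_eq_card {X : Matrix m n K} (hX : X.rank = Fintype.card n) :
    Function.Injective X.mulVec := by
  rw [mulVec_injective_iff, linearIndependent_iff_card_eq_finrank_span]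
  exact hX.symm.trans X.rank_eq_finrank_span_cols

end Field

section Real

variable {m n : Type*} [Fintype m] [Fintype n]

theorem posDef_transpose_mul_self_of_rank_eq_card {X : Matrix m n ℝ}
    (hX : X.rank = Fintype.card n) : (Xᵀ * X).PosDef := by
  simpa using PosDef.conjTranspose_mul_self X (mulVec_injective_of_rank_eq_card hX)

theorem PosDef.add_mul_mul_transpose {Ω : Matrix m m ℝ} (hΩ : Ω.PosDef) {K : Matrix n n ℝ}
    (hK : K.PosSemidef) (X : Matrix m n ℝ) : (Ω + X * K * Xᵀ).PosDef := by
  simpa using hΩ.add_posSemidef (hK.mul_mul_conjTranspose_same X)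

end Real

end Matrix

theorem stmt_13_general {n k : ℕ}
    (X : Matrix (Fin n) (Fin k) ℝ) (hX : X.rank = k)
    (Z : Matrix (Fin n) (Fin (n - k)) ℝ) (hXZ : Xᵀ * Z = 0)
    (Ω : Matrix (Fin n) (Fin n) ℝ) (hΩ : Ω.PosDef)
    (ρ : ℝ) (hρ : 0 < ρ)
    (K₁ K₂ : Matrix (Fin k) (Fin k) ℝ)
    (hK₁ : K₁ = ρ • (Xᵀ * Ω⁻¹ * X)⁻¹) (hK₂ : K₂ = ρ • (Xᵀ * X)⁻¹)
    (Γ : Matrix (Fin k) (Fin k) ℝ) (hΓ : Γ.PosDef)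
    (Δ : Matrix (Fin (n - k)) (Fin (n - k)) ℝ)
    (hΩrep : Ω = X * Γ * Xᵀ + Z * Δ * Zᵀ) :
    K₁ * Xᵀ * (Ω + X * K₁ * Xᵀ)⁻¹ = K₂ * Xᵀ * (1 + X * K₂ * Xᵀ)⁻¹ := by
  have hXX : (Xᵀ * X).PosDef := posDef_transpose_mul_self_of_rank_eq_card (by simpa using hX)
  set L := (Xᵀ * X)⁻¹ * Xᵀ
  have hLX : L * X = 1 := by rw [Matrix.mul_assoc, nonsing_inv_mul _ hXX.isUnit_det]
  have hLZ : L * Z = 0 := by rw [Matrix.mul_assoc, hXZ, Matrix.mul_zero]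
  have hLΩ : L * Ω = Γ * Xᵀ := hΩrep ▸ mul_raoForm_of_mul_eq hLX hLZ Γ Δ
  have hK₁Γ : K₁ = ρ • Γ := by
    rw [hK₁, hΩrep, transpose_mul_inv_raoForm_mul hLX hLZ hΓ.isUnit_det (hΩrep ▸ hΩ.isUnit_det),
      nonsing_inv_nonsing_inv _ hΓ.isUnit_det]
  have hshrink (M : Matrix (Fin k) (Fin n) ℝ) : (ρ / (1 + ρ)) • (M + ρ • M) = ρ • M := by
    match_scalars
    field_simp
  have hLHS : K₁ * Xᵀ * (Ω + X * K₁ * Xᵀ)⁻¹ = (ρ / (1 + ρ)) • L := by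
    refine mul_inv_eq_of_mul_eq (hΩ.add_mul_mul_transpose ?_ X).isUnit_det ?_
    · exact hK₁Γ ▸ hΓ.posSemidef.smul hρ.le
    · rw [Matrix.smul_mul, Matrix.mul_add, hLΩ, ← Matrix.mul_assoc, ← Matrix.mul_assoc, hLX,
        Matrix.one_mul, hK₁Γ, Matrix.smul_mul]
      exact hshrink _
  have hRHS : K₂ * Xᵀ * (1 + X * K₂ * Xᵀ)⁻¹ = (ρ / (1 + ρ)) • L := by
    refine mul_inv_eq_of_mul_eq (PosDef.one.add_mul_mul_transpose ?_ X).isUnit_det ?_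
    · exact hK₂ ▸ hXX.inv.posSemidef.smul hρ.le
    · rw [Matrix.smul_mul, Matrix.mul_add, Matrix.mul_one, ← Matrix.mul_assoc, ← Matrix.mul_assoc,
        hLX, Matrix.one_mul, hK₂, Matrix.smul_mul]
      exact hshrink _
  rw [hLHS, hRHS]

theorem stmt_13 {n k : ℕ} (hnk : k < n)
    (X : Matrix (Fin n) (Fin k) ℝ) (hX : X.rank = k)
    (Z : Matrix (Fin n) (Fin (n - k)) ℝ) (hXZ : Xᵀ * Z = 0) (hZ : Z.rank = n - k)
    (Ω : Matrix (Fin n) (Fin n) ℝ) (hΩ : Ω.PosDef)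
    (ρ : ℝ) (hρ : 0 < ρ)
    (K₁ K₂ : Matrix (Fin k) (Fin k) ℝ)
    (hK₁ : K₁ = ρ • (Xᵀ * Ω⁻¹ * X)⁻¹) (hK₂ : K₂ = ρ • (Xᵀ * X)⁻¹)
    (Γ : Matrix (Fin k) (Fin k) ℝ) (hΓ : Γ.PosDef)
    (Δ : Matrix (Fin (n - k)) (Fin (n - k)) ℝ) (hΔ : Δ.PosDef)
    (hΩrep : Ω = X * Γ * Xᵀ + Z * Δ * Zᵀ) :
    K₁ * Xᵀ * (Ω + X * K₁ * Xᵀ)⁻¹ = K₂ * Xᵀ * (1 + X * K₂ * Xᵀ)⁻¹ :=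
  stmt_13_general X hX Z hXZ Ω hΩ ρ hρ K₁ K₂ hK₁ hK₂ Γ hΓ Δ hΩrep
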